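/- arXiv:2211.13893 — 3 statements merged into one kernel-verified Lean document; each statement's English description precedes it below -/
import Mathlib

section
/- Let V be a finite-dimensional real inner product space with inner product ⟨·,·⟩ (playing the role of the global energy bilinear form a, with energy norm ‖v‖ = ⟨v,v⟩^{1/2}). Let N ≥ 1 and suppose: (i) for j = 1,…,N there are linear operators Ξ_j : V → V with Σ_{j=1}^N Ξ_j = id_V (partition of unity operators); (ii) for j = 1,…,N there are symmetric positive semidefinite bilinear forms a_j on V (local oversampled energy forms) and a constant k₁ > 0 with Σ_{j=1}^N a_j(v,v) ≤ k₁⟨v,v⟩ for all v ∈ V; (iii) there is k₀ ≥ 1 such that for each i, the number of indices j for which the subspaces Ξ_i(V) and Ξ_j(V) are not orthogonal is at most k₀; (iv) W is a linear subspace of V (the coarse space), u ∈ V (the exact solution), u_p ∈ V (the global particular function), and there are vectors u_j ∈ V, ζ_j ∈ V and reals λ_j > 0 such that u − u_p = Σ_{j=1}^N Ξ_j u_j, Ξ_j ζ_j ∈ W, ‖Ξ_j(u_j − ζ_j)‖² ≤ λ_j^{-1} a_j(u_j, u_j) (local spectral approximation property), and a_j(u_j, u_j) ≤ a_j(u, u)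 (local stability); (v) u_G = u_p + w_G with w_G ∈ W satisfies the Galerkin condition ⟨u − u_G, w⟩ = 0 for all w ∈ W. Then ‖u − u_G‖² ≤ k₀ k₁ (min_{1≤j≤N} λ_j)^{-1} ‖u‖²; that is, ‖u − u_G‖ ≤ C (λ_min^∉)^{-1/2} ‖u‖ with C = (k₀ k₁)^{1/2} and λ_min^∉ = min_j λ_j. -/
open scoped RealInnerProductSpace

/-- Abstract form of the MS-GFEM global error bound (Theorem 1 of the paper): under a
partition-of-unity decomposition of the error, local spectral approximation, local stability,
bounded sums of local energies, finite overlap of the partition-of-unity ranges, and Galerkin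
orthogonality of the coarse solution, the coarse approximation error satisfies
`‖u - u_G‖² ≤ k₀ * k₁ * (min_j λ_j)⁻¹ * ‖u‖²`. -/
theorem msgfem_global_error_bound
    {V : Type*} [NormedAddCommGroup V] [InnerProductSpace ℝ V] [FiniteDimensional ℝ V]
    {N : ℕ} (hN : 1 ≤ N)
    (Ξ : Fin N → V →ₗ[ℝ] V) (hPoU : ∑ j, Ξ j = LinearMap.id)
    (aj : Fin N → V →ₗ[ℝ] V →ₗ[ℝ] ℝ)
    (haj_symm : ∀ j (x y : V), aj j x y = aj j y x)
    (haj_psd : ∀ j (v : V), 0 ≤ aj j v v)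
    (k₁ : ℝ) (hk₁ : 0 < k₁)
    (hk₁_bound : ∀ v : V, ∑ j, aj j v v ≤ k₁ * ⟪v, v⟫)
    (k₀ : ℝ) (hk₀ : 1 ≤ k₀)
    (hoverlap : ∀ i : Fin N,
      (({j : Fin N | ¬ ∀ x ∈ LinearMap.range (Ξ i), ∀ y ∈ LinearMap.range (Ξ j),
          ⟪x, y⟫ = 0}).ncard : ℝ) ≤ k₀)
    (W : Submodule ℝ V) (u up : V)
    (uj ζj : Fin N → V) (lam : Fin N → ℝ) (hlam : ∀ j, 0 < lam j)
    (hdecomp : u - up = ∑ j, Ξ j (uj j))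
    (hζW : ∀ j, Ξ j (ζj j) ∈ W)
    (hspec : ∀ j, ‖Ξ j (uj j - ζj j)‖ ^ 2 ≤ (lam j)⁻¹ * aj j (uj j) (uj j))
    (hstab : ∀ j, aj j (uj j) (uj j) ≤ aj j u u)
    (uG wG : V) (hwG : wG ∈ W) (huG : uG = up + wG)
    (hGal : ∀ w ∈ W, ⟪u - uG, w⟫ = 0) :
    ‖u - uG‖ ^ 2 ≤ k₀ * k₁ * (⨅ j, lam j)⁻¹ * ‖u‖ ^ 2 := by
  classical
  haveI : Nonempty (Fin N) := ⟨⟨0, hN⟩⟩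
  set m := ⨅ j, lam j with hm
  obtain ⟨j0, hj0⟩ := Finite.exists_min lam
  have hmle : ∀ j, m ≤ lam j := fun j =>
    ciInf_le (Set.Finite.bddBelow (Set.finite_range lam)) j
  have hmpos : 0 < m := lt_of_lt_of_le (hlam j0) (le_ciInf hj0)
  -- local error pieces
  set v : Fin N → V := fun j => Ξ j (uj j - ζj j) with hv
  set w : V := ∑ j, Ξ j (ζj j) with hw
  have hwW : w ∈ W := Submodule.sum_mem _ fun j _ => hζW j
  have hz : u - up - w = ∑ j, v j := by
    rw [hdecomp, hw, ← Finset.sum_sub_distrib]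
    exact Finset.sum_congr rfl fun j _ => by simp [hv, map_sub]
  set e := u - uG with he
  -- Galerkin orthogonality
  have he2 : ‖e‖ ^ 2 = ⟪e, u - up - w⟫ := by
    have heW : e - (u - up - w) ∈ W := by
      have hEq : e - (u - up - w) = w - wG := by rw [he, huG]; abel
      rw [hEq]; exact Submodule.sub_mem _ hwW hwG
    have h1 : ⟪e, e - (u - up - w)⟫ = 0 := hGal _ heW
    have h0 : ⟪e, e⟫ = ⟪e, u - up - w⟫ + ⟪e, e - (u - up - w)⟫ := by
      rw [← inner_add_right]
      congr 1
      abel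
    rw [← real_inner_self_eq_norm_sq, h0, h1, add_zero]
  -- orthogonality predicate
  set P : Fin N → Fin N → Prop := fun i j =>
    ∀ x ∈ LinearMap.range (Ξ i), ∀ y ∈ LinearMap.range (Ξ j), ⟪x, y⟫ = 0 with hP
  have hPsymm : ∀ i j, ¬ P i j ↔ ¬ P j i := by
    intro i j
    constructor <;> { intro h hc; exact h (fun x hx y hy => by
      rw [real_inner_comm]; exact hc y hy x hx) }
  set T : Fin N → Finset (Fin N) := fun i => Finset.univ.filter (fun j => ¬ P i j) with hT
  have hTcard : ∀ i, ((T i).card : ℝ) ≤ k₀ := by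
    intro i
    have hset : {j | ¬ P i j} = (↑(T i) : Set (Fin N)) := by
      ext j; simp [hT]
    have := hoverlap i
    rw [show ({j : Fin N | ¬ ∀ x ∈ LinearMap.range (Ξ i), ∀ y ∈ LinearMap.range (Ξ j),
        ⟪x, y⟫ = 0}) = {j | ¬ P i j} from rfl, hset, Set.ncard_coe_finset] at this
    exact this
  have hinner0 : ∀ i j, P i j → ⟪v i, v j⟫ = 0 := fun i j h =>
    h _ ⟨_, rfl⟩ _ ⟨_, rfl⟩
  -- combinatorial (finite overlap) bound
  have key : ‖∑ j, v j‖ ^ 2 ≤ k₀ * ∑ j, ‖v j‖ ^ 2 := by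
    have h1 : ‖∑ j, v j‖ ^ 2 = ∑ i, ∑ j, ⟪v i, v j⟫ := by
      rw [← real_inner_self_eq_norm_sq, sum_inner]
      exact Finset.sum_congr rfl fun i _ => inner_sum _ _ _
    have h2 : ∀ i, ∑ j, ⟪v i, v j⟫ = ∑ j ∈ T i, ⟪v i, v j⟫ := by
      intro i
      rw [eq_comm]
      apply Finset.sum_filter_of_ne
      intro j _ hne hPij
      exact hne (hinner0 i j hPij)
    have h3 : ∀ i j, ⟪v i, v j⟫ ≤ ‖v i‖ ^ 2 / 2 + ‖v j‖ ^ 2 / 2 := by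
      intro i j
      have := real_inner_le_norm (v i) (v j)
      nlinarith [sq_nonneg (‖v i‖ - ‖v j‖)]
    have hswap : ∑ i, ∑ j ∈ T i, (‖v j‖ ^ 2 / 2) = ∑ j, ((T j).card : ℝ) * (‖v j‖ ^ 2 / 2) := by
      have : ∀ i, ∑ j ∈ T i, (‖v j‖ ^ 2 / 2)
          = ∑ j, if ¬ P i j then ‖v j‖ ^ 2 / 2 else 0 := fun i => Finset.sum_filter _ _
      rw [Finset.sum_congr rfl fun i _ => this i, Finset.sum_comm]
      refine Finset.sum_congr rfl fun j _ => ?_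
      have hfilt : Finset.univ.filter (fun i => ¬ P i j) = T j := by
        ext i; simp [hT, hPsymm i j]
      rw [← Finset.sum_filter, hfilt, Finset.sum_const, nsmul_eq_mul]
    calc ‖∑ j, v j‖ ^ 2 = ∑ i, ∑ j ∈ T i, ⟪v i, v j⟫ := by
          rw [h1]; exact Finset.sum_congr rfl fun i _ => h2 i
      _ ≤ ∑ i, ∑ j ∈ T i, (‖v i‖ ^ 2 / 2 + ‖v j‖ ^ 2 / 2) := by
          refine Finset.sum_le_sum fun i _ => Finset.sum_le_sum fun j _ => h3 i j
      _ = (∑ i, ((T i).card : ℝ) * (‖v i‖ ^ 2 / 2)) + ∑ i, ∑ j ∈ T i, (‖v j‖ ^ 2 / 2) := by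
          rw [← Finset.sum_add_distrib]
          refine Finset.sum_congr rfl fun i _ => ?_
          rw [Finset.sum_add_distrib, Finset.sum_const, nsmul_eq_mul]
      _ = ∑ i, ((T i).card : ℝ) * ‖v i‖ ^ 2 := by
          rw [hswap, ← Finset.sum_add_distrib]
          exact Finset.sum_congr rfl fun i _ => by ring
      _ ≤ ∑ i, k₀ * ‖v i‖ ^ 2 := by
          refine Finset.sum_le_sum fun i _ => ?_
          exact mul_le_mul_of_nonneg_right (hTcard i) (sq_nonneg _)
      _ = k₀ * ∑ j, ‖v j‖ ^ 2 := by rw [Finset.mul_sum]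
  -- spectral + stability + energy-sum bound
  have hsum_le : ∑ j, ‖v j‖ ^ 2 ≤ k₁ * m⁻¹ * ‖u‖ ^ 2 := by
    have hstep : ∀ j, ‖v j‖ ^ 2 ≤ m⁻¹ * aj j u u := by
      intro j
      refine le_trans (hspec j) ?_
      have h1 : (lam j)⁻¹ ≤ m⁻¹ := by
        apply inv_anti₀ hmpos (hmle j)
      have h2 : aj j (uj j) (uj j) ≤ aj j u u := hstab j
      exact mul_le_mul h1 h2 (haj_psd j (uj j)) (inv_nonneg.mpr hmpos.le)
    calc ∑ j, ‖v j‖ ^ 2 ≤ ∑ j, m⁻¹ * aj j u u := Finset.sum_le_sum fun j _ => hstep j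
      _ = m⁻¹ * ∑ j, aj j u u := by rw [Finset.mul_sum]
      _ ≤ m⁻¹ * (k₁ * ⟪u, u⟫) :=
          mul_le_mul_of_nonneg_left (hk₁_bound u) (inv_nonneg.mpr hmpos.le)
      _ = k₁ * m⁻¹ * ‖u‖ ^ 2 := by rw [real_inner_self_eq_norm_sq]; ring
  -- Galerkin quasi-optimality
  have hez : ‖e‖ ^ 2 ≤ ‖e‖ * ‖∑ j, v j‖ := by
    rw [he2, hz]
    exact real_inner_le_norm _ _
  have hfinal : ‖e‖ ^ 2 ≤ ‖∑ j, v j‖ ^ 2 := by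
    nlinarith [norm_nonneg e, norm_nonneg (∑ j, v j), sq_nonneg (‖e‖ - ‖∑ j, v j‖)]
  have : ‖e‖ ^ 2 ≤ k₀ * (k₁ * m⁻¹ * ‖u‖ ^ 2) := by
    refine le_trans hfinal (le_trans key ?_)
    exact mul_le_mul_of_nonneg_left hsum_le (by linarith)
  calc ‖u - uG‖ ^ 2 = ‖e‖ ^ 2 := by rw [he]
    _ ≤ k₀ * (k₁ * m⁻¹ * ‖u‖ ^ 2) := this
    _ = k₀ * k₁ * m⁻¹ * ‖u‖ ^ 2 := by ring
end

section
/- Let V_D be a finite-dimensional real vector space, a a symmetric positive definite bilinear form on V_D, V_DI a linear subspace of V_D, V_A := {u ∈ V_D : a(u, ξ) = 0 for all ξ ∈ V_DI} the A-harmonic subspace, and B a symmetric bilinear form on V_D. Then for every λ ∈ ℝ and φ ∈ V_D the following are equivalent: (i) φ ∈ V_A and a(φ, v) = λ B(φ, v) for all v ∈ V_A; (ii) there exists p ∈ V_DI such that a(φ, v) + a(v, p) = λ B(φ, v) for all v ∈ V_D, and a(φ, ξ) = 0 for all ξ ∈ V_DI. That is, the generalized eigenproblem posed on the A-harmonic subspace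 is equivalent to the mixed (Lagrange multiplier) formulation. -/
/-- Equivalence of the A-harmonically constrained generalized eigenproblem with its mixed
(Lagrange multiplier) formulation: for a symmetric positive definite form `a` on a
finite-dimensional space, a subspace `V_DI`, the A-harmonic subspace
`V_A = {u | a u ξ = 0 ∀ ξ ∈ V_DI}` and a symmetric bilinear form `B`, a pair `(λ, φ)` satisfies
the eigenproblem on `V_A` iff there is a Lagrange multiplier `p ∈ V_DI` realizing the mixed
formulation. -/
theorem aharmonic_eigenproblem_mixed_formulation_equiv
    {V : Type*} [AddCommGroup V] [Module ℝ V] [FiniteDimensional ℝ V]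
    (a : V →ₗ[ℝ] V →ₗ[ℝ] ℝ)
    (ha_symm : ∀ u v, a u v = a v u) (ha_pos : ∀ v : V, v ≠ 0 → 0 < a v v)
    (VDI : Submodule ℝ V)
    (B : V →ₗ[ℝ] V →ₗ[ℝ] ℝ) (hB_symm : ∀ u v, B u v = B v u)
    (lam : ℝ) (φ : V) :
    ((∀ ξ ∈ VDI, a φ ξ = 0) ∧
      ∀ v : V, (∀ ξ ∈ VDI, a v ξ = 0) → a φ v = lam * B φ v) ↔
    (∃ p ∈ VDI, (∀ v : V, a φ v + a v p = lam * B φ v) ∧ ∀ ξ ∈ VDI, a φ ξ = 0) := by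
  -- The "Gram" map on VDI
  set S : VDI →ₗ[ℝ] (VDI →ₗ[ℝ] ℝ) :=
    ((a.flip.compl₂ VDI.subtype).comp VDI.subtype) with hS
  have hS_apply : ∀ (p ξ : VDI), S p ξ = a (ξ : V) (p : V) := fun p ξ => rfl
  have hS_inj : Function.Injective S := by
    rw [← LinearMap.ker_eq_bot, Submodule.eq_bot_iff]
    intro p hp
    have h0 : a (p : V) (p : V) = 0 := by
      have := congrArg (fun f => f p) hp
      simpa [hS_apply] using this
    by_contra hne
    have hpne : (p : V) ≠ 0 := by
      intro h; exact hne (Subtype.ext h)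
    exact absurd h0 (ne_of_gt (ha_pos _ hpne))
  have hS_surj : Function.Surjective S := by
    have hdim : Module.finrank ℝ VDI = Module.finrank ℝ (VDI →ₗ[ℝ] ℝ) :=
      (Subspace.dual_finrank_eq (K := ℝ)).symm
    exact (LinearMap.injective_iff_surjective_of_finrank_eq_finrank hdim).mp hS_inj
  constructor
  · rintro ⟨hharm, heig⟩
    -- the residual functional
    set f : V →ₗ[ℝ] ℝ := lam • (B φ) - a φ with hf
    have hf_apply : ∀ v, f v = lam * B φ v - a φ v := fun v => rfl
    -- get p ∈ VDI representing f on VDI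
    obtain ⟨p, hp⟩ := hS_surj (f.comp VDI.subtype)
    refine ⟨(p : V), p.2, ?_, hharm⟩
    intro v
    -- decompose v = q + w with q ∈ VDI, w A-harmonic
    obtain ⟨q, hq⟩ := hS_surj ((a.flip v).comp VDI.subtype)
    have hq' : ∀ ξ : VDI, a (ξ : V) (q : V) = a (ξ : V) v := by
      intro ξ
      have := congrArg (fun g => g ξ) hq
      simpa [hS_apply] using this
    have hw_harm : ∀ ξ ∈ VDI, a (v - (q : V)) ξ = 0 := by
      intro ξ hξ
      have h := hq' ⟨ξ, hξ⟩
      simp only [map_sub, LinearMap.sub_apply]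
      rw [ha_symm v ξ, ha_symm (q : V) ξ]
      simp only [Submodule.coe_mk] at h
      linarith
    -- a v p = f v
    have hp' : ∀ ξ : VDI, a (ξ : V) (p : V) = f (ξ : V) := by
      intro ξ
      have := congrArg (fun g => g ξ) hp
      simpa [hS_apply] using this
    have h1 : a (q : V) (p : V) = f (q : V) := hp' q
    have h2 : a (v - (q : V)) (p : V) = 0 := hw_harm (p : V) p.2
    have h3 : f (v - (q : V)) = 0 := by
      rw [hf_apply]
      have := heig (v - (q : V)) hw_harm
      linarith
    have hav : a v (p : V) = f v := by
      have e1 : a v (p : V) = a (v - (q : V)) (p : V) + a (q : V) (p : V) := by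
        simp [map_sub]
      have e2 : f v = f (v - (q : V)) + f (q : V) := by
        simp
      rw [e1, e2, h1, h2, h3]
    rw [hav, hf_apply]; ring
  · rintro ⟨p, hp, hmix, hharm⟩
    refine ⟨hharm, fun v hv => ?_⟩
    have h1 := hmix v
    have h2 : a v p = 0 := hv p hp
    linarith
end

section
/- Let V be a finite-dimensional real inner product space, let V_1, …, V_N ⊆ V be linear subspaces, and let P_j denote the orthogonal projection of V onto V_j. Suppose k₀ ≥ 1 is such that for each i the number of indices j for which V_i and V_j are not orthogonal is at most k₀. Then for every v ∈ V: Σ_{j=1}^N ‖P_j v‖² ≤ k₀ ‖v‖², and consequently ⟨(Σ_{j=1}^N P_j) v, v⟩ ≤ k₀ ‖v‖², i.e. the largest eigenvalue of the additive Schwarz operator Σ_j P_j is at most k₀. -/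
open scoped RealInnerProductSpace
open Finset

/-!
Write `p j = P_j v`. Self-adjointness and idempotence of `P_j` give `∑ ‖p j‖² = ⟪∑ p j, v⟫`,
which is at most `‖∑ p j‖ ‖v‖`. Expanding `‖∑ p j‖²`, only the pairs with `⟪p i, p j⟫ ≠ 0`
contribute; bounding each by `(‖p i‖² + ‖p j‖²) / 2` and using that every row has at most `k₀`
such pairs yields `‖∑ p j‖² ≤ k₀ ∑ ‖p j‖²`. The two estimates together give `∑ ‖p j‖² ≤ k₀ ‖v‖²`.
-/

section
variable {E ι : Type*} [NormedAddCommGroup E] [InnerProductSpace ℝ E] [Fintype ι]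

theorem sum_sum_filter_inner_ne_zero_comm (p : ι → E) (a : ι → ℝ) :
    ∑ i, ∑ j with ⟪p i, p j⟫ ≠ 0, a j = ∑ i, ∑ j with ⟪p i, p j⟫ ≠ 0, a i := by
  simp only [sum_filter]
  rw [sum_comm]
  simp only [real_inner_comm]

theorem norm_sum_sq_le_mul_sum_norm_sq (p : ι → E) {k : ℝ}
    (hk : ∀ i, (#{j | ⟪p i, p j⟫ ≠ 0} : ℝ) ≤ k) :
    ‖∑ i, p i‖ ^ 2 ≤ k * ∑ i, ‖p i‖ ^ 2 := by
  calc ‖∑ i, p i‖ ^ 2 = ∑ i, ∑ j with ⟪p i, p j⟫ ≠ 0, ⟪p i, p j⟫ := by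
        rw [← real_inner_self_eq_norm_sq, sum_inner]
        exact sum_congr rfl fun i _ => by rw [inner_sum, sum_filter_ne_zero]
    _ ≤ ∑ i, ∑ j with ⟪p i, p j⟫ ≠ 0, (‖p i‖ ^ 2 + ‖p j‖ ^ 2) / 2 := by
        gcongr with i _ j _
        linarith [real_inner_le_norm (p i) (p j), two_mul_le_add_sq ‖p i‖ ‖p j‖]
    _ = ∑ i, ∑ j with ⟪p i, p j⟫ ≠ 0, ‖p i‖ ^ 2 := by
        simp only [add_div, sum_add_distrib, sum_sum_filter_inner_ne_zero_comm p (‖p ·‖ ^ 2 / 2)]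
        simp only [← sum_add_distrib, add_halves]
    _ = ∑ i, (#{j | ⟪p i, p j⟫ ≠ 0} : ℝ) * ‖p i‖ ^ 2 := by simp only [sum_const, nsmul_eq_mul]
    _ ≤ k * ∑ i, ‖p i‖ ^ 2 := by
        rw [mul_sum]
        gcongr with i
        exact hk i

theorem real_inner_le_mul_norm_sq_of_norm_sq_le {u v : E} {k : ℝ} (hk : 0 ≤ k)
    (h : ‖u‖ ^ 2 ≤ k * ⟪u, v⟫) : ⟪u, v⟫ ≤ k * ‖v‖ ^ 2 := by
  rcases le_or_gt ⟪u, v⟫ 0 with hneg | hpos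
  · exact hneg.trans (by positivity)
  refine le_of_mul_le_mul_left ?_ hpos
  calc ⟪u, v⟫ * ⟪u, v⟫ ≤ ‖u‖ ^ 2 * ‖v‖ ^ 2 := by
        simpa only [real_inner_self_eq_norm_sq] using real_inner_mul_inner_self_le u v
    _ ≤ k * ⟪u, v⟫ * ‖v‖ ^ 2 := by gcongr
    _ = ⟪u, v⟫ * (k * ‖v‖ ^ 2) := by ring

theorem real_inner_starProjection_self (K : Submodule ℝ E) [K.HasOrthogonalProjection] (v : E) :
    ⟪K.starProjection v, v⟫ = ‖K.starProjection v‖ ^ 2 := by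
  simpa using K.re_inner_starProjection_eq_normSq v

end

/-- Finite-overlap upper spectral bound for the additive Schwarz operator: if for each `i` the
number of subspaces `V j` not orthogonal to `V i` is at most `k₀`, then
`∑ j ‖P_j v‖² ≤ k₀ ‖v‖²` and `⟪(∑ j P_j) v, v⟫ ≤ k₀ ‖v‖²`, i.e. the largest eigenvalue of the
additive Schwarz operator `∑ j P_j` is at most `k₀`. -/
theorem additive_schwarz_upper_bound
    {V : Type*} [NormedAddCommGroup V] [InnerProductSpace ℝ V] [FiniteDimensional ℝ V]
    {N : ℕ} (Vj : Fin N → Submodule ℝ V)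
    (k₀ : ℝ) (hk₀ : 1 ≤ k₀)
    (hoverlap : ∀ i : Fin N,
      (({j : Fin N | ¬ ∀ x ∈ Vj i, ∀ y ∈ Vj j, ⟪x, y⟫ = 0}).ncard : ℝ) ≤ k₀) :
    ∀ v : V,
      (∑ j, ‖(Submodule.orthogonalProjection (Vj j) v : V)‖ ^ 2 ≤ k₀ * ‖v‖ ^ 2) ∧
      ⟪∑ j, (Submodule.orthogonalProjection (Vj j) v : V), v⟫ ≤ k₀ * ‖v‖ ^ 2 := by
  classical
  intro v
  set p : Fin N → V := fun j => (Vj j).starProjection v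
  have hsum : ∑ j, ‖p j‖ ^ 2 = ⟪∑ j, p j, v⟫ := by
    simp only [p, sum_inner, real_inner_starProjection_self]
  have hcard (i : Fin N) : (#{j | ⟪p i, p j⟫ ≠ 0} : ℝ) ≤ k₀ := by
    refine le_trans ?_ (hoverlap i)
    rw [Set.ncard_eq_toFinset_card', Set.toFinset_ofPred]
    gcongr with j
    exact fun hortho => hortho _ ((Vj i).starProjection_apply_mem v) _
      ((Vj j).starProjection_apply_mem v)
  have key := real_inner_le_mul_norm_sq_of_norm_sq_le (by linarith)
    (hsum ▸ norm_sum_sq_le_mul_sum_norm_sq p hcard)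
  exact ⟨hsum ▸ key, key⟩
end
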